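/- Let q be odd and 1 ≤ j ≤ i−1 ≤ q−5. Then there exists a subset {x₁,…,x_i} ⊆ 𝔽_q^* of i pairwise distinct nonzero elements such that S_{j−1,i} ≠ 0 and S_{j,i}² − S_{j−1,i}·S_{j+1,i} ≠ 0, where S_{ℓ,i} is the ℓ-th elementary symmetric polynomial in x₁,…,x_i. -/

import Mathlib

/-- The `k`-th elementary symmetric polynomial in `x₁, …, x_i`. -/
noncomputable def esymmF {F : Type*} [CommRing F] {r : ℕ} (x : Fin r → F) (k : ℕ) : F :=
  ∑ s ∈ Finset.powersetCard k (Finset.univ : Finset (Fin r)), ∏ i ∈ s, x i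

lemma esymmF_eq_multiset {F : Type*} [CommRing F] {r : ℕ} (x : Fin r → F) (k : ℕ) :
    esymmF x k = (Finset.univ.val.map x).esymm k :=
  (Finset.esymm_map_val x Finset.univ k).symm

lemma esymmF_zero {F : Type*} [CommRing F] {r : ℕ} (x : Fin r → F) : esymmF x 0 = 1 := by
  simp [esymmF]

lemma multiset_esymm_cons {F : Type*} [CommRing F] (a : F) (s : Multiset F) (k : ℕ) :
    (a ::ₘ s).esymm (k + 1) = s.esymm (k + 1) + a * s.esymm k := by
  rw [Multiset.esymm, Multiset.powersetCard_cons, Multiset.map_add, Multiset.sum_add]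
  congr 1
  rw [Multiset.map_map]
  simp only [Function.comp_def, Multiset.prod_cons]
  rw [Multiset.sum_map_mul_left]
  rfl

lemma map_snoc {F : Type*} {m : ℕ} (y : Fin m → F) (t : F) :
    (Finset.univ.val.map (Fin.snoc y t : Fin (m + 1) → F)) =
      t ::ₘ Finset.univ.val.map y := by
  rw [Fin.univ_castSuccEmb, Finset.cons_val, Multiset.map_cons, Fin.snoc_last,
    Finset.map_val, Multiset.map_map]
  congr 1
  refine Multiset.map_congr rfl fun s _ => ?_
  simp

lemma esymmF_snoc {F : Type*} [CommRing F] {m : ℕ} (y : Fin m → F) (t : F) (k : ℕ) :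
    esymmF (Fin.snoc y t : Fin (m + 1) → F) (k + 1) =
      esymmF y (k + 1) + t * esymmF y k := by
  rw [esymmF_eq_multiset, map_snoc, multiset_esymm_cons, esymmF_eq_multiset,
    esymmF_eq_multiset]

lemma snoc_inj {F : Type*} {m : ℕ} {y : Fin m → F} {t : F}
    (hy : Function.Injective y) (ht : ∀ s, t ≠ y s) :
    Function.Injective (Fin.snoc y t : Fin (m + 1) → F) := by
  intro a b hab
  rcases Fin.eq_castSucc_or_eq_last a with ⟨a', rfl⟩ | rfl <;>
    rcases Fin.eq_castSucc_or_eq_last b with ⟨b', rfl⟩ | rfl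
  · simp only [Fin.snoc_castSucc] at hab
    exact congrArg _ (hy hab)
  · simp only [Fin.snoc_castSucc, Fin.snoc_last] at hab
    exact absurd hab.symm (ht a')
  · simp only [Fin.snoc_castSucc, Fin.snoc_last] at hab
    exact absurd hab (ht b')
  · rfl

open Polynomial in
lemma exists_good {F : Type*} [Field F] [Fintype F] (m : ℕ) (y : Fin m → F)
    (q2 q1 q0 l1 l0 : F) (hq2 : q2 ≠ 0) (hl : l1 ≠ 0 ∨ l0 ≠ 0)
    (hcard : m + 5 ≤ Fintype.card F) :
    ∃ t : F, t ≠ 0 ∧ (∀ s, t ≠ y s) ∧ l1 * t + l0 ≠ 0 ∧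
      q2 * t ^ 2 + q1 * t + q0 ≠ 0 := by
  set Q : F[X] := C q2 * X ^ 2 + C q1 * X + C q0 with hQdef
  set L : F[X] := C l1 * X + C l0 with hLdef
  set P : F[X] := ∏ s : Fin m, (X - C (y s)) with hPdef
  have hQ0 : Q ≠ 0 := by
    intro h
    apply hq2
    have := congrArg (fun p : F[X] => p.coeff 2) h
    simpa [hQdef, coeff_C] using this
  have hL0 : L ≠ 0 := by
    intro h
    rcases hl with hl | hl
    · apply hl
      have := congrArg (fun p : F[X] => p.coeff 1) h
      simpa [hLdef, coeff_C] using this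
    · apply hl
      have := congrArg (fun p : F[X] => p.coeff 0) h
      simpa [hLdef, coeff_C] using this
  have hP0 : P ≠ 0 := Finset.prod_ne_zero_iff.2 fun s _ => X_sub_C_ne_zero (y s)
  have hX0 : (X : F[X]) ≠ 0 := X_ne_zero
  set p : F[X] := Q * L * X * P with hpdef
  have hp0 : p ≠ 0 := mul_ne_zero (mul_ne_zero (mul_ne_zero hQ0 hL0) hX0) hP0
  have hdeg : p.natDegree ≤ m + 4 := by
    have hQd : Q.natDegree ≤ 2 := natDegree_quadratic_le
    have hLd : L.natDegree ≤ 1 := natDegree_linear_le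
    have hPd : P.natDegree ≤ m := by
      refine le_trans (natDegree_prod_le _ _) ?_
      have : ∀ s ∈ (Finset.univ : Finset (Fin m)), ((X : F[X]) - C (y s)).natDegree = 1 :=
        fun s _ => natDegree_X_sub_C (y s)
      rw [Finset.sum_congr rfl this]
      simp
    calc p.natDegree ≤ (Q * L * X).natDegree + P.natDegree := natDegree_mul_le
      _ ≤ (Q * L).natDegree + X.natDegree + P.natDegree := by
          exact Nat.add_le_add_right natDegree_mul_le _
      _ ≤ Q.natDegree + L.natDegree + X.natDegree + P.natDegree := by
          exact Nat.add_le_add_right (Nat.add_le_add_right natDegree_mul_le _) _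
      _ ≤ 2 + 1 + 1 + m := by
          have : (X : F[X]).natDegree = 1 := natDegree_X
          omega
      _ = m + 4 := by omega
  have hlt : p.natDegree < Fintype.card F := by omega
  obtain ⟨t, ht⟩ := p.exists_eval_ne_zero_of_natDegree_lt_card hp0 (by
    rw [Cardinal.mk_fintype]; exact_mod_cast hlt)
  have heval : p.eval t = (q2 * t ^ 2 + q1 * t + q0) * (l1 * t + l0) * t *
      ∏ s : Fin m, (t - y s) := by
    simp [hpdef, hQdef, hLdef, hPdef, eval_prod]
  rw [heval] at ht
  have h1 := mul_ne_zero_iff.1 ht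
  have h2 := mul_ne_zero_iff.1 h1.1
  have h3 := mul_ne_zero_iff.1 h2.1
  refine ⟨t, h2.2, ?_, h3.2, h3.1⟩
  intro s hs
  have := Finset.prod_ne_zero_iff.1 h1.2 s (Finset.mem_univ s)
  exact this (by rw [hs, sub_self])

/-- For odd `q` and `1 ≤ j ≤ i - 1 ≤ q - 5`, there exist pairwise distinct nonzero
`x₁, …, x_i ∈ 𝔽_q^*` with `S_{j-1,i} ≠ 0` and `S_{j,i}² - S_{j-1,i} S_{j+1,i} ≠ 0`. -/
theorem stmt_9 {F : Type*} [Field F] [Fintype F]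
    (hodd : Odd (Fintype.card F)) (i j : ℕ)
    (hj1 : 1 ≤ j) (hji : j + 1 ≤ i) (hi : i + 4 ≤ Fintype.card F) :
    ∃ x : Fin i → F, Function.Injective x ∧ (∀ t, x t ≠ 0) ∧
      esymmF x (j - 1) ≠ 0 ∧
      esymmF x j ^ 2 - esymmF x (j - 1) * esymmF x (j + 1) ≠ 0 := by
  clear hodd
  induction j, hj1 using Nat.le_induction generalizing i with
  | base =>
    classical
    obtain ⟨m, rfl⟩ : ∃ m, i = m + 1 := ⟨i - 1, by omega⟩
    have hm : m + 5 ≤ Fintype.card F := by omega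
    obtain ⟨e⟩ : Nonempty (Fin m ↪ {a : F // ¬a = 0}) := by
      apply Function.Embedding.nonempty_of_card_le
      have h1 : Fintype.card {a : F // ¬a = 0} = Fintype.card F - 1 := by
        rw [Fintype.card_subtype_compl, Fintype.card_subtype_eq]
      rw [Fintype.card_fin, h1]
      omega
    set y : Fin m → F := fun s => (e s : F) with hydef
    have hyInj : Function.Injective y := fun a b hab =>
      e.injective (Subtype.ext hab)
    have hy0 : ∀ s, y s ≠ 0 := fun s => (e s).2
    obtain ⟨t, ht0, hty, -, hq⟩ := exists_good m y 1 (esymmF y 1)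
      (esymmF y 1 ^ 2 - esymmF y 2) 0 1 one_ne_zero (Or.inr one_ne_zero) hm
    refine ⟨Fin.snoc y t, snoc_inj hyInj hty, ?_, ?_, ?_⟩
    · intro s
      refine Fin.lastCases ?_ ?_ s
      · simpa using ht0
      · intro s'
        simpa using hy0 s'
    · show esymmF (Fin.snoc y t : Fin (m + 1) → F) 0 ≠ 0
      rw [esymmF_zero]
      exact one_ne_zero
    · have h1 : esymmF (Fin.snoc y t : Fin (m + 1) → F) 1 = esymmF y 1 + t * esymmF y 0 :=
        esymmF_snoc y t 0
      rw [esymmF_zero] at h1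
      have h2 : esymmF (Fin.snoc y t : Fin (m + 1) → F) 2 = esymmF y 2 + t * esymmF y 1 :=
        esymmF_snoc y t 1
      have h0 : esymmF (Fin.snoc y t : Fin (m + 1) → F) 0 = 1 := esymmF_zero _
      show esymmF (Fin.snoc y t : Fin (m + 1) → F) 1 ^ 2 -
        esymmF (Fin.snoc y t : Fin (m + 1) → F) 0 *
        esymmF (Fin.snoc y t : Fin (m + 1) → F) 2 ≠ 0
      rw [h1, h2, h0]
      intro h
      apply hq
      linear_combination h
  | succ j hj IH =>
    obtain ⟨m, rfl⟩ : ∃ m, i = m + 1 := ⟨i - 1, by omega⟩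
    obtain ⟨y, hyInj, hy0, hA, hB⟩ := IH m (by omega) (by omega)
    obtain ⟨k, rfl⟩ : ∃ k, j = k + 1 := ⟨j - 1, by omega⟩
    rw [show k + 1 - 1 = k from rfl] at hA
    set a := esymmF y k with hadef
    set b := esymmF y (k + 1) with hbdef
    set c := esymmF y (k + 2) with hcdef
    set d := esymmF y (k + 3) with hddef
    have hB' : b ^ 2 - a * c ≠ 0 := hB
    obtain ⟨t, ht0, hty, hlin, hq⟩ := exists_good m y (b ^ 2 - a * c)
      (b * c - a * d) (c ^ 2 - b * d) a b hB' (Or.inl hA) (by omega)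
    refine ⟨Fin.snoc y t, snoc_inj hyInj hty, ?_, ?_, ?_⟩
    · intro s
      refine Fin.lastCases ?_ ?_ s
      · simpa using ht0
      · intro s'
        simpa using hy0 s'
    · show esymmF (Fin.snoc y t : Fin (m + 1) → F) (k + 1) ≠ 0
      have g1 : esymmF (Fin.snoc y t : Fin (m + 1) → F) (k + 1) = b + t * a :=
        esymmF_snoc y t k
      rw [g1]
      intro h
      apply hlin
      linear_combination h
    · show esymmF (Fin.snoc y t : Fin (m + 1) → F) (k + 2) ^ 2 -
        esymmF (Fin.snoc y t : Fin (m + 1) → F) (k + 1) *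
        esymmF (Fin.snoc y t : Fin (m + 1) → F) (k + 3) ≠ 0
      have g1 : esymmF (Fin.snoc y t : Fin (m + 1) → F) (k + 1) = b + t * a :=
        esymmF_snoc y t k
      have g2 : esymmF (Fin.snoc y t : Fin (m + 1) → F) (k + 2) = c + t * b :=
        esymmF_snoc y t (k + 1)
      have g3 : esymmF (Fin.snoc y t : Fin (m + 1) → F) (k + 3) = d + t * c :=
        esymmF_snoc y t (k + 2)
      rw [g1, g2, g3]
      intro h
      apply hq
      linear_combination h
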